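/- arXiv:2405.13849 — 2 statements merged into one kernel-verified Lean document; each statement's English description precedes it below -/
import Mathlib

section
/- For 1 < p < 2 there exists a constant C > 0 such that for all vectors ξ, ζ in ℝ^N with (ξ, ζ) ≠ (0, 0), |ξ - ζ|^2 / (|ξ| + |ζ|)^{2-p} ≤ C * ((|ξ|^{p-2} • ξ - |ζ|^{p-2} • ζ) ⬝ (ξ - ζ)), where the term |ξ|^{p-2} • ξ is interpreted as 0 when ξ = 0. -/
open scoped RealInnerProductSpace

private lemma bern {q t : ℝ} (hq0 : 0 ≤ q) (hq1 : q ≤ 1) (ht : 0 ≤ t) :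
    t ^ q ≤ q * t + (1 - q) := by
  have := Real.geom_mean_le_arith_mean2_weighted hq0 (by linarith : (0:ℝ) ≤ 1 - q) ht
    zero_le_one (by ring)
  simpa using this

private lemma rpow_succ' {x : ℝ} (hx : 0 ≤ x) {r : ℝ} (h : r + 1 ≠ 0) :
    x ^ (r + 1) = x ^ r * x :=
  Real.rpow_add_one' hx h

-- a^{p-1} - b^{p-1} ≥ (p-1) a^{p-2} (a - b) for 0 ≤ b ≤ a, 0 < a
private lemma scalar1 {p a b : ℝ} (hp1 : 1 < p) (hp2 : p < 2) (hb : 0 ≤ b) (hba : b ≤ a)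
    (ha : 0 < a) : (p - 1) * a ^ (p - 2) * (a - b) + b ^ (p - 1) ≤ a ^ (p - 1) := by
  set q := p - 1 with hq
  have hq0 : 0 < q := by simp [hq]; linarith
  have hq1 : q < 1 := by simp [hq]; linarith
  have hber := bern hq0.le hq1.le (div_nonneg hb ha.le) (t := b / a)
  have haq : (0:ℝ) < a ^ q := Real.rpow_pos_of_pos ha q
  have hdiv : (b / a) ^ q = b ^ q / a ^ q := Real.div_rpow hb ha.le q
  rw [hdiv] at hber
  -- multiply by a^q
  have h2 : b ^ q ≤ (q * (b / a) + (1 - q)) * a ^ q := by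
    calc b ^ q = (b ^ q / a ^ q) * a ^ q := by field_simp
    _ ≤ (q * (b / a) + (1 - q)) * a ^ q := by
        exact mul_le_mul_of_nonneg_right hber haq.le
  have haq1 : a ^ q = a ^ (q - 1) * a := by
    have := rpow_succ' ha.le (r := q - 1) (by simp; linarith [hq0] )
    simpa using this
  have haq1' : a ^ (p - 2) = a ^ (q - 1) := by norm_num [hq]; ring_nf
  rw [haq1']
  have hba' : (q * (b / a) + (1 - q)) * a ^ q = a ^ q - q * a ^ (q - 1) * (a - b) := by
    rw [haq1]; field_simp; ring
  rw [hba'] at h2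
  linarith

-- (a+b)^{p-2} ≤ a^{p-2} + b^{p-2}
private lemma sum_bound {p a b : ℝ} (hp2 : p < 2) (ha : 0 ≤ a) (hb : 0 ≤ b)
    (hab : 0 < a + b) : (a + b) ^ (p - 2) ≤ a ^ (p - 2) + b ^ (p - 2) := by
  rcases eq_or_lt_of_le ha with h | h
  · rcases eq_or_lt_of_le hb with h' | h'
    · exfalso; rw [← h, ← h'] at hab; norm_num at hab
    · rw [← h]; simp [Real.zero_rpow (by linarith : p - 2 ≠ 0)]
  · have h1 : (a + b) ^ (p - 2) ≤ a ^ (p - 2) :=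
      Real.rpow_le_rpow_of_nonpos h (by linarith) (by linarith)
    have h2 : (0:ℝ) ≤ b ^ (p - 2) := Real.rpow_nonneg hb _
    linarith

-- key at s = a*b : c (a+b)^{p-2} (a-b)^2 ≤ a^p + b^p - (a^{p-2}+b^{p-2}) a b
private lemma at_ab {p a b : ℝ} (hp1 : 1 < p) (hp2 : p < 2) (hb : 0 ≤ b) (hba : b ≤ a)
    (ha : 0 < a) :
    ((p - 1) / 2) * (a + b) ^ (p - 2) * (a - b) ^ 2 ≤
      a ^ p + b ^ p - (a ^ (p - 2) + b ^ (p - 2)) * (a * b) := by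
  have hap : a ^ p = a ^ (p - 1) * a := by
    have := rpow_succ' ha.le (r := p - 1) (by simp; linarith)
    simpa using this
  have hbp : b ^ p = b ^ (p - 1) * b := by
    have := rpow_succ' hb (r := p - 1) (by simp; linarith)
    simpa using this
  have hap1 : a ^ (p - 1) = a ^ (p - 2) * a := by
    have := rpow_succ' ha.le (r := p - 2) (by simp; linarith)
    rw [show p - 2 + 1 = p - 1 by ring] at this; exact this
  have hbp1 : b ^ (p - 1) = b ^ (p - 2) * b := by
    have := rpow_succ' hb (r := p - 2) (by simp; linarith)
    rw [show p - 2 + 1 = p - 1 by ring] at this; exact this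
  have hfact : a ^ p + b ^ p - (a ^ (p - 2) + b ^ (p - 2)) * (a * b)
      = (a - b) * (a ^ (p - 1) - b ^ (p - 1)) := by
    rw [hap, hbp, hap1, hbp1]; ring
  rw [hfact]
  have hs1 := scalar1 hp1 hp2 hb hba ha
  have hmono : (a + b) ^ (p - 2) ≤ a ^ (p - 2) :=
    Real.rpow_le_rpow_of_nonpos ha (by linarith) (by linarith)
  have hab0 : 0 ≤ a - b := by linarith
  have hp10 : (0:ℝ) < p - 1 := by linarith
  have hpow : 0 ≤ a ^ (p - 2) := Real.rpow_nonneg ha.le _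
  have hpowab : 0 ≤ (a + b) ^ (p - 2) := Real.rpow_nonneg (by linarith) _
  have hXS : 0 ≤ (a + b) ^ (p - 2) * (a - b) ^ 2 := mul_nonneg hpowab (sq_nonneg _)
  have h2 : (p - 1) * ((a + b) ^ (p - 2) * (a - b) ^ 2) ≤
      (p - 1) * (a ^ (p - 2) * (a - b) ^ 2) :=
    mul_le_mul_of_nonneg_left (mul_le_mul_of_nonneg_right hmono (sq_nonneg _)) hp10.le
  have h1 : (a - b) * ((p - 1) * a ^ (p - 2) * (a - b)) ≤
      (a - b) * (a ^ (p - 1) - b ^ (p - 1)) :=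
    mul_le_mul_of_nonneg_left (by linarith) hab0
  nlinarith [hXS, h1, h2]

private lemma scalar_main {p a b s : ℝ} (hp1 : 1 < p) (hp2 : p < 2) (ha : 0 ≤ a)
    (hb : 0 ≤ b) (hab : 0 < a + b) (hs : s ≤ a * b) :
    ((p - 1) / 2) * (a + b) ^ (p - 2) * (a ^ 2 - 2 * s + b ^ 2) ≤
      a ^ p + b ^ p - (a ^ (p - 2) + b ^ (p - 2)) * s := by
  have hsum := sum_bound hp2 ha hb hab
  have hpowab : 0 ≤ (a + b) ^ (p - 2) := Real.rpow_nonneg hab.le _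
  -- reduce to s = a*b
  have key : ((p - 1) / 2) * (a + b) ^ (p - 2) * (a - b) ^ 2 ≤
      a ^ p + b ^ p - (a ^ (p - 2) + b ^ (p - 2)) * (a * b) := by
    rcases le_total b a with h | h
    · have ha' : 0 < a := by linarith
      exact at_ab hp1 hp2 hb h ha'
    · have hb' : 0 < b := by linarith
      have := at_ab hp1 hp2 ha h hb'
      calc ((p - 1) / 2) * (a + b) ^ (p - 2) * (a - b) ^ 2
          = ((p - 1) / 2) * (b + a) ^ (p - 2) * (b - a) ^ 2 := by ring_nf
        _ ≤ b ^ p + a ^ p - (b ^ (p - 2) + a ^ (p - 2)) * (b * a) := this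
        _ = a ^ p + b ^ p - (a ^ (p - 2) + b ^ (p - 2)) * (a * b) := by ring
  have hslope : (p - 1) * (a + b) ^ (p - 2) ≤ a ^ (p - 2) + b ^ (p - 2) := by
    nlinarith [hsum, hpowab]
  nlinarith [mul_le_mul_of_nonneg_left (sub_nonneg.mpr hs)
    (sub_nonneg.mpr hslope : (0:ℝ) ≤ a ^ (p - 2) + b ^ (p - 2) - (p - 1) * (a + b) ^ (p - 2))]

theorem p_laplacian_singular_monotonicity (N : ℕ) (p : ℝ) (hp1 : 1 < p) (hp2 : p < 2) :
    ∃ C > (0:ℝ), ∀ ξ ζ : EuclideanSpace ℝ (Fin N), ¬(ξ = 0 ∧ ζ = 0) →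
      ‖ξ - ζ‖ ^ 2 / (‖ξ‖ + ‖ζ‖) ^ (2 - p) ≤
        C * ⟪(‖ξ‖ ^ (p - 2)) • ξ - (‖ζ‖ ^ (p - 2)) • ζ, ξ - ζ⟫ := by
  have hp0 : (0:ℝ) < 2 / (p - 1) := div_pos two_pos (by linarith)
  refine ⟨2 / (p - 1), hp0, fun ξ ζ hne => ?_⟩
  set a := ‖ξ‖ with ha'
  set b := ‖ζ‖ with hb'
  have ha : 0 ≤ a := norm_nonneg _
  have hb : 0 ≤ b := norm_nonneg _
  have hab : 0 < a + b := by
    rcases not_and_or.mp hne with h | h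
    · have : 0 < a := by simpa [ha'] using norm_pos_iff.mpr h
      linarith
    · have : 0 < b := by simpa [hb'] using norm_pos_iff.mpr h
      linarith
  set s : ℝ := ⟪ξ, ζ⟫ with hs'
  have hs : s ≤ a * b := real_inner_le_norm ξ ζ
  have hnorm : ‖ξ - ζ‖ ^ 2 = a ^ 2 - 2 * s + b ^ 2 := by
    rw [hs', ha', hb']; exact norm_sub_sq_real ξ ζ
  have hinner : ⟪(a ^ (p - 2)) • ξ - (b ^ (p - 2)) • ζ, ξ - ζ⟫ =
      a ^ p + b ^ p - (a ^ (p - 2) + b ^ (p - 2)) * s := by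
    have hap : a ^ (p - 2) * a ^ 2 = a ^ p := by
      rcases eq_or_lt_of_le ha with h | h
      · rw [← h, Real.zero_rpow (by linarith : p - 2 ≠ 0),
          Real.zero_rpow (by linarith : p ≠ 0)]; ring
      · rw [show (a:ℝ) ^ 2 = a ^ (2:ℝ) by norm_num [Real.rpow_natCast],
          ← Real.rpow_add h]; norm_num
    have hbp : b ^ (p - 2) * b ^ 2 = b ^ p := by
      rcases eq_or_lt_of_le hb with h | h
      · rw [← h, Real.zero_rpow (by linarith : p - 2 ≠ 0),
          Real.zero_rpow (by linarith : p ≠ 0)]; ring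
      · rw [show (b:ℝ) ^ 2 = b ^ (2:ℝ) by norm_num [Real.rpow_natCast],
          ← Real.rpow_add h]; norm_num
    have expand : ⟪(a ^ (p - 2)) • ξ - (b ^ (p - 2)) • ζ, ξ - ζ⟫ =
        a ^ (p - 2) * ‖ξ‖ ^ 2 + b ^ (p - 2) * ‖ζ‖ ^ 2
          - (a ^ (p - 2) + b ^ (p - 2)) * ⟪ξ, ζ⟫ := by
      simp only [inner_sub_left, inner_sub_right, real_inner_smul_left,
        real_inner_self_eq_norm_sq, real_inner_comm ζ ξ]
      ring
    rw [expand, ← ha', ← hb', ← hs', hap, hbp]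
  rw [hinner, hnorm, div_eq_mul_inv, ← Real.rpow_neg hab.le, show -(2 - p) = p - 2 by ring]
  have hkey := scalar_main hp1 hp2 ha hb hab hs
  have hne1 : p - 1 ≠ 0 := ne_of_gt (by linarith)
  calc (a ^ 2 - 2 * s + b ^ 2) * (a + b) ^ (p - 2)
      = (2 / (p - 1)) * ((p - 1) / 2 * (a + b) ^ (p - 2) * (a ^ 2 - 2 * s + b ^ 2)) := by
        field_simp
    _ ≤ 2 / (p - 1) * (a ^ p + b ^ p - (a ^ (p - 2) + b ^ (p - 2)) * s) :=
        mul_le_mul_of_nonneg_left hkey hp0.le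
end

section
/- For 1 < p < 2 there exists a constant C > 0 such that for all vectors ξ, ζ in ℝ^N, ||ξ|^{p-2} • ξ - |ζ|^{p-2} • ζ| ≤ C * |ξ - ζ|^{p-1}, where |ξ|^{p-2} • ξ is interpreted as 0 when ξ = 0. -/
open Real

private lemma key2 (p : ℝ) (hp1 : 1 < p) (hp2 : p < 2) {a b : ℝ} (hb : 0 < b) (hba : b ≤ a) :
    b ^ (p - 1) - a ^ (p - 2) * b ≤ (a - b) ^ (p - 1) := by
  have ha : 0 < a := hb.trans_le hba
  rcases eq_or_lt_of_le hba with h | h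
  · subst h
    have : b ^ (p - 2) * b = b ^ (p - 1) := by
      rw [← Real.rpow_add_one hb.ne', show p - 2 + 1 = p - 1 by ring]
    rw [this, sub_self, sub_self, Real.zero_rpow (by linarith)]
  · have hab : 0 < a - b := by linarith
    calc b ^ (p - 1) - a ^ (p - 2) * b
        ≤ a ^ (p - 1) - a ^ (p - 2) * b := by
          have := Real.rpow_le_rpow hb.le hba (by linarith : (0:ℝ) ≤ p - 1)
          linarith
      _ = a ^ (p - 2) * (a - b) := by
          rw [mul_sub, ← Real.rpow_add_one ha.ne', show p - 2 + 1 = p - 1 by ring]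
      _ ≤ (a - b) ^ (p - 2) * (a - b) := by
          apply mul_le_mul_of_nonneg_right _ hab.le
          exact Real.rpow_le_rpow_of_nonpos hab (by linarith) (by linarith)
      _ = (a - b) ^ (p - 1) := by
          rw [← Real.rpow_add_one hab.ne', show p - 2 + 1 = p - 1 by ring]

private lemma aux (N : ℕ) (p : ℝ) (hp1 : 1 < p) (hp2 : p < 2)
    (ξ ζ : EuclideanSpace ℝ (Fin N)) (hba : ‖ζ‖ ≤ ‖ξ‖) :
    ‖(‖ξ‖ ^ (p - 2)) • ξ - (‖ζ‖ ^ (p - 2)) • ζ‖ ≤ (2 ^ (2 - p) + 1) * ‖ξ - ζ‖ ^ (p - 1) := by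
  set a := ‖ξ‖ with ha_def
  set b := ‖ζ‖ with hb_def
  set d := ‖ξ - ζ‖ with hd_def
  have hb0 : 0 ≤ b := norm_nonneg _
  have hd0 : 0 ≤ d := norm_nonneg _
  have hC0 : (0:ℝ) ≤ 2 ^ (2 - p) + 1 := by positivity
  rcases eq_or_lt_of_le (hb0.trans hba) with ha0 | ha0
  · -- a = 0, hence ξ = 0 and ζ = 0
    have hξ : ξ = 0 := norm_eq_zero.mp ha0.symm
    have hζ : ζ = 0 := norm_eq_zero.mp (le_antisymm (ha0 ▸ hba) hb0).symm.symm
    subst hξ; subst hζ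
    simp only [smul_zero, sub_zero, norm_zero]
    positivity
  · -- a > 0
    have hid : (a ^ (p - 2)) • ξ - (b ^ (p - 2)) • ζ
        = (a ^ (p - 2)) • (ξ - ζ) + ((a ^ (p - 2)) - (b ^ (p - 2))) • ζ := by
      module
    have hnorm : ‖(a ^ (p - 2)) • ξ - (b ^ (p - 2)) • ζ‖
        ≤ a ^ (p - 2) * d + |a ^ (p - 2) - b ^ (p - 2)| * b := by
      rw [hid]
      refine (norm_add_le _ _).trans ?_
      rw [norm_smul, norm_smul, Real.norm_eq_abs, Real.norm_eq_abs,
        abs_of_nonneg (Real.rpow_nonneg ha0.le _)]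
    have hterm1 : a ^ (p - 2) * d ≤ 2 ^ (2 - p) * d ^ (p - 1) := by
      rcases eq_or_lt_of_le hd0 with hd | hd
      · rw [← hd, mul_zero, Real.zero_rpow (by linarith), mul_zero]
      · have h2a : d ≤ 2 * a := by
          have := norm_sub_le ξ ζ
          rw [← ha_def, ← hb_def, ← hd_def] at this
          linarith
        have h1 : a ^ (p - 2) ≤ (d / 2) ^ (p - 2) :=
          Real.rpow_le_rpow_of_nonpos (by linarith) (by linarith) (by linarith)
        have e1 : (d / 2) ^ (p - 2) * d = 2 ^ (2 - p) * d ^ (p - 1) := by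
          rw [Real.div_rpow hd.le (by norm_num), div_mul_eq_mul_div,
            ← Real.rpow_add_one hd.ne', show p - 2 + 1 = p - 1 by ring,
            show (2:ℝ) - p = -(p - 2) by ring, Real.rpow_neg (by norm_num)]
          ring
        calc a ^ (p - 2) * d ≤ (d / 2) ^ (p - 2) * d :=
              mul_le_mul_of_nonneg_right h1 hd0
          _ = 2 ^ (2 - p) * d ^ (p - 1) := e1
    have hterm2 : |a ^ (p - 2) - b ^ (p - 2)| * b ≤ d ^ (p - 1) := by
      rcases eq_or_lt_of_le hb0 with hb | hb
      · rw [← hb, mul_zero]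
        exact Real.rpow_nonneg hd0 _
      · have hle : a ^ (p - 2) ≤ b ^ (p - 2) :=
          Real.rpow_le_rpow_of_nonpos hb hba (by linarith)
        rw [abs_of_nonpos (by linarith)]
        have hbb : b ^ (p - 2) * b = b ^ (p - 1) := by
          rw [← Real.rpow_add_one hb.ne', show p - 2 + 1 = p - 1 by ring]
        have e2 : -(a ^ (p - 2) - b ^ (p - 2)) * b = b ^ (p - 1) - a ^ (p - 2) * b := by
          rw [neg_sub, sub_mul, hbb]
        rw [e2]
        have hk := key2 p hp1 hp2 hb hba
        have hab : a - b ≤ d := by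
          have := norm_sub_norm_le ξ ζ
          rw [← ha_def, ← hb_def, ← hd_def] at this
          linarith [le_abs_self (a - b)]
        have : (a - b) ^ (p - 1) ≤ d ^ (p - 1) :=
          Real.rpow_le_rpow (by linarith) hab (by linarith)
        linarith
    calc ‖(a ^ (p - 2)) • ξ - (b ^ (p - 2)) • ζ‖
        ≤ a ^ (p - 2) * d + |a ^ (p - 2) - b ^ (p - 2)| * b := hnorm
      _ ≤ 2 ^ (2 - p) * d ^ (p - 1) + d ^ (p - 1) := add_le_add hterm1 hterm2
      _ = (2 ^ (2 - p) + 1) * d ^ (p - 1) := by ring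

theorem p_laplacian_holder_type (N : ℕ) (p : ℝ) (hp1 : 1 < p) (hp2 : p < 2) :
    ∃ C > (0:ℝ), ∀ ξ ζ : EuclideanSpace ℝ (Fin N),
      ‖(‖ξ‖ ^ (p - 2)) • ξ - (‖ζ‖ ^ (p - 2)) • ζ‖ ≤ C * ‖ξ - ζ‖ ^ (p - 1) := by
  refine ⟨2 ^ (2 - p) + 1, by positivity, fun ξ ζ => ?_⟩
  rcases le_total ‖ζ‖ ‖ξ‖ with h | h
  · exact aux N p hp1 hp2 ξ ζ h
  · have := aux N p hp1 hp2 ζ ξ h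
    rwa [norm_sub_rev, norm_sub_rev ζ ξ] at this
end
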